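/- Let p ≥ 1, n a positive natural, and R > 0. Let w, ŵ : Fin n → ℝ≥0 with w(i) ≤ 4R for all i and ∑ i, ŵ(i) ≥ n·(4R/9). Then (∑ i, (w i)^p)^{1/p} ≤ 9 · (∑ i, (ŵ i)^p)^{1/p}. -/

import Mathlib

/-!
Each of the `n` values `w i` is at most `4R`, so `∑ w i ^ p ≤ n (4R)^p`. By Jensen's inequality for
the convex function `x ↦ x ^ p`, an average of at least `4R/9` forces `∑ ŵ i ^ p ≥ n (4R/9)^p`.
Hence `∑ w i ^ p ≤ 9 ^ p ∑ ŵ i ^ p`, and taking `p`-th roots gives the factor `9`.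
-/

open Finset

lemma sum_rpow_le_card_mul_rpow {ι : Type*} (s : Finset ι) {f : ι → ℝ} {p b : ℝ} (hp : 0 ≤ p)
    (hf0 : ∀ i ∈ s, 0 ≤ f i) (hfb : ∀ i ∈ s, f i ≤ b) :
    ∑ i ∈ s, f i ^ p ≤ #s * b ^ p := by
  simpa using sum_le_card_nsmul s (fun i => f i ^ p) (b ^ p) fun i hi =>
    Real.rpow_le_rpow (hf0 i hi) (hfb i hi) hp

lemma card_mul_rpow_le_sum_rpow {ι : Type*} (s : Finset ι) {f : ι → ℝ} {p a : ℝ} (hp : 1 ≤ p)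
    (ha : 0 ≤ a) (hf0 : ∀ i ∈ s, 0 ≤ f i) (hsum : #s * a ≤ ∑ i ∈ s, f i) :
    #s * a ^ p ≤ ∑ i ∈ s, f i ^ p := by
  rcases s.eq_empty_or_nonempty with rfl | hs
  · simp
  have hcard : (0 : ℝ) < #s := by exact_mod_cast hs.card_pos
  have jensen := Real.rpow_arith_mean_le_arith_mean_rpow s (fun _ => (#s : ℝ)⁻¹) f
    (fun _ _ => by positivity) (by simp [hcard.ne']) hf0 hp
  rw [← mul_sum, ← mul_sum] at jensen
  have hmean : a ≤ (#s : ℝ)⁻¹ * ∑ i ∈ s, f i := by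
    rwa [inv_mul_eq_div, le_div_iff₀ hcard, mul_comm]
  calc #s * a ^ p ≤ #s * ((#s : ℝ)⁻¹ * ∑ i ∈ s, f i) ^ p := by gcongr
    _ ≤ #s * ((#s : ℝ)⁻¹ * ∑ i ∈ s, f i ^ p) := by gcongr
    _ = ∑ i ∈ s, f i ^ p := by field_simp

lemma rpow_one_div_le_mul_rpow_one_div {x y C p : ℝ} (hx : 0 ≤ x) (hy : 0 ≤ y) (hC : 0 ≤ C)
    (hp : 0 < p) (h : x ≤ C ^ p * y) : x ^ (1 / p) ≤ C * y ^ (1 / p) := by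
  rwa [one_div, Real.rpow_inv_le_iff_of_pos hx (by positivity) hp, Real.mul_rpow hC (by positivity),
    Real.rpow_inv_rpow hy hp.ne']

theorem stmt_7_general (p : ℝ) (hp : 1 ≤ p) (n : ℕ) (R : ℝ) (hR : 0 < R)
    (w what : Fin n → ℝ) (hw0 : ∀ i, 0 ≤ w i) (hwhat0 : ∀ i, 0 ≤ what i)
    (hw : ∀ i, w i ≤ 4 * R) (hwhat : (n : ℝ) * (4 * R / 9) ≤ ∑ i, what i) :
    (∑ i, (w i) ^ p) ^ (1 / p) ≤ 9 * (∑ i, (what i) ^ p) ^ (1 / p) := by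
  have hp0 : 0 < p := by linarith
  have hupper := sum_rpow_le_card_mul_rpow univ hp0.le (fun i _ => hw0 i) (fun i _ => hw i)
  have hlower := card_mul_rpow_le_sum_rpow univ hp (a := 4 * R / 9) (by positivity) (fun i _ => hwhat0 i)
    (by simpa using hwhat)
  simp only [card_univ, Fintype.card_fin] at hupper hlower
  refine rpow_one_div_le_mul_rpow_one_div (sum_nonneg fun i _ => Real.rpow_nonneg (hw0 i) p)
    (sum_nonneg fun i _ => Real.rpow_nonneg (hwhat0 i) p) (by norm_num) hp0 ?_
  calc ∑ i, w i ^ p ≤ n * (4 * R) ^ p := hupper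
    _ = 9 ^ p * (n * (4 * R / 9) ^ p) := by
      rw [mul_left_comm, ← Real.mul_rpow (by norm_num) (by positivity)]
      ring_nf
    _ ≤ 9 ^ p * ∑ i, what i ^ p := by gcongr

theorem stmt_7 (p : ℝ) (hp : 1 ≤ p) (n : ℕ) (hn : 0 < n) (R : ℝ) (hR : 0 < R)
    (w what : Fin n → ℝ) (hw0 : ∀ i, 0 ≤ w i) (hwhat0 : ∀ i, 0 ≤ what i)
    (hw : ∀ i, w i ≤ 4 * R) (hwhat : (n : ℝ) * (4 * R / 9) ≤ ∑ i, what i) :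
    (∑ i, (w i) ^ p) ^ (1 / p) ≤ 9 * (∑ i, (what i) ^ p) ^ (1 / p) :=
  stmt_7_general p hp n R hR w what hw0 hwhat0 hw hwhat
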